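/- Uniqueness lemma for jets: Suppose k is a nonnegative integer, P : ℝⁿ → ℝ is a polynomial function, Δ is a sequentially dense subset of 𝒟(ℝⁿ, ℝ), a ∈ ℝⁿ, and lim_{r→0+} r^{−k−n} ∫ φ(r⁻¹(x−a)) P(x) dℒⁿx = 0 for every φ ∈ Δ. Then D^m P(a) = 0 for m = 0, …, k. -/

import Mathlib

open MeasureTheory Filter Metric Topology

noncomputable section

/-- Euclidean space `ℝⁿ`. -/
abbrev Euc (n : ℕ) : Type := EuclideanSpace ℝ (Fin n)

variable {n : ℕ} {Y Z : Type*}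

section Defs
variable [NormedAddCommGroup Y] [NormedSpace ℝ Y] [NormedAddCommGroup Z] [NormedSpace ℝ Z]

/-- `φ ∈ 𝒟(ℝⁿ, Y)`: smooth compactly supported. -/
def IsTest (φ : Euc n → Y) : Prop :=
  ContDiff ℝ (⊤ : ℕ∞) φ ∧ HasCompactSupport φ

/-- `sup_x ‖D^i φ(x)‖`. -/
def supDer (i : ℕ) (φ : Euc n → Y) : ℝ :=
  ⨆ x, ‖iteratedFDeriv ℝ i φ x‖

/-- `sup { ‖D^m φ(x)‖ : x, 0 ≤ m ≤ i }`. -/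
def supDers (i : ℕ) (φ : Euc n → Y) : ℝ :=
  ⨆ m : Fin (i + 1), supDer (m : ℕ) φ

/-- A distribution `T ∈ 𝒟′(ℝⁿ, Y)`: a real-linear functional on test functions with,
on each compact `K`, a bound by some seminorm `ν_K^i`. -/
structure IsDistribution (n : ℕ) (Y : Type*) [NormedAddCommGroup Y] [NormedSpace ℝ Y]
    (T : (Euc n → Y) → ℝ) : Prop where
  map_add : ∀ φ ψ : Euc n → Y, IsTest φ → IsTest ψ → T (φ + ψ) = T φ + T ψ
  map_smul : ∀ (c : ℝ) (φ : Euc n → Y), IsTest φ → T (c • φ) = c * T φ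
  bound : ∀ K : Set (Euc n), IsCompact K → ∃ (i : ℕ) (M : ℝ), 0 ≤ M ∧
    ∀ φ : Euc n → Y, IsTest φ → tsupport φ ⊆ K → |T φ| ≤ M * supDers i φ

/-- First-order partial derivative in the `j`-th coordinate direction. -/
def pderiv1 (j : Fin n) (φ : Euc n → Y) : Euc n → Y :=
  fun x => fderiv ℝ φ x (EuclideanSpace.single j 1)

/-- Iterated partial derivatives along a list of coordinate directions. -/
def pderivList : List (Fin n) → (Euc n → Y) → Euc n → Y
  | [], φ => φ
  | j :: l, φ => pderiv1 j (pderivList l φ)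

/-- The list of directions encoded by a multi-index `ξ : Fin n → ℕ`. -/
def multiIndexList (ξ : Fin n → ℕ) : List (Fin n) :=
  (List.finRange n).foldr (fun j l => List.replicate (ξ j) j ++ l) []

/-- `∂^ξ φ` for a multi-index `ξ`. -/
def pderivMulti (ξ : Fin n → ℕ) (φ : Euc n → Y) : Euc n → Y :=
  pderivList (multiIndexList ξ) φ

/-- Distributional partial derivative `D^ξ T`, `(D^ξ T)(φ) = (−1)^{|ξ|} T(∂^ξ φ)`. -/
def Der (ξ : Fin n → ℕ) (T : (Euc n → Y) → ℝ) : (Euc n → Y) → ℝ :=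
  fun φ => (-1 : ℝ) ^ (∑ j, ξ j) * T (pderivMulti ξ φ)

/-- A polynomial function of degree at most `k` (the zero function if `k < 0`):
`P x = Σ_{m=0}^{k} ψ_m (x, …, x)` for continuous `m`-linear maps `ψ_m`. -/
def IsPolyDegLE (k : ℤ) (P : Euc n → Z) : Prop :=
  (k < 0 ∧ P = 0) ∨
  (0 ≤ k ∧ ∃ ψ : (m : Fin (k.toNat + 1)) →
      ContinuousMultilinearMap ℝ (fun _ : Fin (m : ℕ) => Euc n) Z,
      ∀ x, P x = ∑ m, ψ m (fun _ => x))

/-- `x ↦ φ(r⁻¹(x − a))`. -/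
def scaleFn (a : Euc n) (r : ℝ) (φ : Euc n → Y) : Euc n → Y :=
  fun x => φ (r⁻¹ • (x - a))

/-- `(T − S)_x (φ(r⁻¹(x−a)))` where `S(φ) = ∫ ⟨φ, P⟩ dℒⁿ`. -/
def jetError (T : (Euc n → Y) → ℝ) (P : Euc n → StrongDual ℝ Y) (a : Euc n) (r : ℝ)
    (φ : Euc n → Y) : ℝ :=
  T (scaleFn a r φ) - ∫ x, P x (scaleFn a r φ x)

/-- `T` is pointwise differentiable of order `k` at `a` with jet polynomial `P`. -/
def PtDiffAtWith (T : (Euc n → Y) → ℝ) (k : ℤ) (a : Euc n)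
    (P : Euc n → StrongDual ℝ Y) : Prop :=
  IsPolyDegLE k P ∧ ∀ φ : Euc n → Y, IsTest φ →
    Tendsto (fun r : ℝ => r ^ (-(k : ℝ) - n) * jetError T P a r φ) (𝓝[>] (0 : ℝ)) (𝓝 0)

/-- `T` is pointwise differentiable of order `k` at `a`. -/
def PtDiffAt (T : (Euc n → Y) → ℝ) (k : ℤ) (a : Euc n) : Prop :=
  ∃ P, PtDiffAtWith T k a P

/-- `T` is pointwise differentiable of order `(k,α)` at `a` with jet polynomial `P`:
`limsup_{r→0+} r^{−k−α−n} |(T−S)_x(φ(r⁻¹(x−a)))| < ∞` for each test function `φ`. -/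
def PtDiffHolderAtWith (T : (Euc n → Y) → ℝ) (k : ℤ) (α : ℝ) (a : Euc n)
    (P : Euc n → StrongDual ℝ Y) : Prop :=
  IsPolyDegLE k P ∧ ∀ φ : Euc n → Y, IsTest φ → ∃ M δ : ℝ, 0 < δ ∧
    ∀ r : ℝ, 0 < r → r ≤ δ → |jetError T P a r φ| ≤ M * r ^ ((k : ℝ) + α + n)

/-- `T` is pointwise differentiable of order `(k,α)` at `a`. -/
def PtDiffHolderAt (T : (Euc n → Y) → ℝ) (k : ℤ) (α : ℝ) (a : Euc n) : Prop :=
  ∃ P, PtDiffHolderAtWith T k α a P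

/-- `φ ∈ 𝒟_{B(0,1)}(ℝⁿ,Y)` with `ν^i_{B(0,1)}(φ) = sup_x ‖D^i φ(x)‖ ≤ 1`. -/
def NuUnit (i : ℕ) (φ : Euc n → Y) : Prop :=
  IsTest φ ∧ tsupport φ ⊆ closedBall (0 : Euc n) 1 ∧ ∀ x, ‖iteratedFDeriv ℝ i φ x‖ ≤ 1

/-- `T` is `ν^i_{B(0,1)}`-pointwise differentiable of order `k` at `a` with jet `P`. -/
def NuPtDiffAtWith (i : ℕ) (T : (Euc n → Y) → ℝ) (k : ℤ) (a : Euc n)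
    (P : Euc n → StrongDual ℝ Y) : Prop :=
  IsPolyDegLE k P ∧ ∀ ε : ℝ, 0 < ε → ∃ δ : ℝ, 0 < δ ∧
    ∀ r : ℝ, 0 < r → r ≤ δ → ∀ φ : Euc n → Y, NuUnit i φ →
      |jetError T P a r φ| ≤ ε * r ^ ((k : ℝ) + n)

/-- `T` is `ν^i_{B(0,1)}`-pointwise differentiable of order `k` at `a`. -/
def NuPtDiffAt (i : ℕ) (T : (Euc n → Y) → ℝ) (k : ℤ) (a : Euc n) : Prop :=
  ∃ P, NuPtDiffAtWith i T k a P

/-- `T` is `ν^i_{B(0,1)}`-pointwise differentiable of order `(k,α)` at `a` with jet `P`. -/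
def NuPtDiffHolderAtWith (i : ℕ) (T : (Euc n → Y) → ℝ) (k : ℤ) (α : ℝ) (a : Euc n)
    (P : Euc n → StrongDual ℝ Y) : Prop :=
  IsPolyDegLE k P ∧ ∃ M δ : ℝ, 0 < δ ∧
    ∀ r : ℝ, 0 < r → r ≤ δ → ∀ φ : Euc n → Y, NuUnit i φ →
      |jetError T P a r φ| ≤ M * r ^ ((k : ℝ) + α + n)

/-- `T` is `ν^i_{B(0,1)}`-pointwise differentiable of order `(k,α)` at `a`. -/
def NuPtDiffHolderAt (i : ℕ) (T : (Euc n → Y) → ℝ) (k : ℤ) (α : ℝ) (a : Euc n) : Prop :=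
  ∃ P, NuPtDiffHolderAtWith i T k α a P

open Classical in
/-- The `m`-th order pointwise differential `pt D^m T(a)`, the `m`-th derivative at `a`
of the (unique) `m`-jet polynomial of `T` at `a` (junk value `0` if it does not exist). -/
def ptD (T : (Euc n → Y) → ℝ) (m : ℕ) (a : Euc n) :
    ContinuousMultilinearMap ℝ (fun _ : Fin m => Euc n) (StrongDual ℝ Y) :=
  if h : PtDiffAt T (m : ℤ) a then iteratedFDeriv ℝ m (Classical.choose h) a else 0

/-- A function of class `(k, α)`: of class `C^k` with `D^k f` locally Hölder
continuous with exponent `α`. -/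
def IsClassKAlpha (k : ℕ) (α : ℝ) (f : Euc n → Z) : Prop :=
  ContDiff ℝ (k : ℕ∞) f ∧ ∀ x : Euc n, ∃ C r : ℝ, 0 < r ∧
    ∀ y ∈ ball x r, ∀ z ∈ ball x r,
      ‖iteratedFDeriv ℝ k f y - iteratedFDeriv ℝ k f z‖ ≤ C * ‖y - z‖ ^ α

/-- `Δ` is a sequentially dense set of test functions: every test function is the limit of
a sequence in `Δ` with supports in a common compact set and all derivatives converging
uniformly. -/
def SeqDense (Δ : Set (Euc n → Y)) : Prop :=
  (∀ φ ∈ Δ, IsTest φ) ∧ ∀ θ : Euc n → Y, IsTest θ →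
    ∃ φ : ℕ → Euc n → Y, (∀ j, φ j ∈ Δ) ∧
      (∃ K : Set (Euc n), IsCompact K ∧ ∀ j, tsupport (φ j) ⊆ K) ∧
      ∀ m : ℕ, TendstoUniformly (fun j => iteratedFDeriv ℝ m (φ j)) (iteratedFDeriv ℝ m θ) atTop

end Defs

/-! Around `a` the polynomial `P` is its own finite power series, `P (a + y) = ∑ᵢ qᵢ (y, …, y)`.
Substituting `x = a + r • y`, the integral of `φ (r⁻¹ • (x - a)) * P x` becomes
`rⁿ ∑ᵢ rⁱ ∫ φ(y) qᵢ(y, …, y) dy`, a polynomial in `r`; since it is `o(r^(k+n))` as `r → 0+`, its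
coefficients of index `i ≤ k` vanish for every `φ ∈ Δ`, hence by density for every test function,
so `y ↦ qᵢ (y, …, y)` is zero for `i ≤ k`. As the sum of a power series only sees the diagonal
values of its terms, these `qᵢ` may be replaced by `0`, and the iterated derivatives of order
`m ≤ k` at `a`, being symmetrizations of the `m`-th term, vanish. -/

section PowerSeries

variable {𝕜 E F : Type*} [NontriviallyNormedField 𝕜] [NormedAddCommGroup E] [NormedSpace 𝕜 E]
  [NormedAddCommGroup F] [NormedSpace 𝕜 F]

theorem exists_hasFiniteFPowerSeriesOnBall_of_eq_sum_multilinear {D : ℕ} {f : E → F}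
    (ψ : (m : Fin D) → ContinuousMultilinearMap 𝕜 (fun _ : Fin m => E) F)
    (hf : ∀ x, f x = ∑ m, ψ m fun _ => x) (a : E) :
    ∃ q : FormalMultilinearSeries 𝕜 E F, HasFiniteFPowerSeriesOnBall f q a D ⊤ := by
  let p : FormalMultilinearSeries 𝕜 E F := fun m => if h : m < D then ψ ⟨m, h⟩ else 0
  have hp : ∀ m, D ≤ m → p m = 0 := fun m hm => dif_neg hm.not_gt
  have hfp : f = p.sum := funext fun x => by
    rw [hf, p.sum_of_finite hp, FormalMultilinearSeries.partialSum,
      ← Fin.sum_univ_eq_sum_range]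
    exact Finset.sum_congr rfl fun m _ => by simp [p]
  refine ⟨p.changeOrigin a, ?_⟩
  simpa [hfp] using (p.hasFiniteFPowerSeriesOnBall_of_finite hp).changeOrigin (y := a) (by simp)

theorem HasFiniteFPowerSeriesOnBall.apply_add_smul {f : E → F}
    {p : FormalMultilinearSeries 𝕜 E F} {x : E} {N : ℕ}
    (h : HasFiniteFPowerSeriesOnBall f p x N ⊤) (r : 𝕜) (y : E) :
    f (x + r • y) = ∑ i ∈ Finset.range N, r ^ i • p i fun _ => y := by
  rw [h.eq_partialSum (r • y) (by simp) N le_rfl]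
  refine Finset.sum_congr rfl fun i _ => ?_
  simpa using (p i).map_smul_univ (fun _ => r) fun _ => y

theorem HasFiniteFPowerSeriesOnBall.iteratedFDeriv_eq_zero [CompleteSpace F] {f : E → F}
    {p : FormalMultilinearSeries 𝕜 E F} {x : E} {N : ℕ} {r : ENNReal}
    (h : HasFiniteFPowerSeriesOnBall f p x N r) {m : ℕ} (hm : ∀ y, p m (fun _ => y) = 0) :
    iteratedFDeriv 𝕜 m f x = 0 := by
  classical
  have hp' : HasFiniteFPowerSeriesOnBall f
      (fun i => if i = m then 0 else p i : FormalMultilinearSeries 𝕜 E F) x N r := by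
    refine .mk' (fun i hi => ?_) h.r_pos fun y hy => ?_
    · by_cases him : i = m
      · rw [if_pos him]
      · rw [if_neg him, h.finite i hi]
    · rw [h.eq_partialSum y hy N le_rfl]
      refine Finset.sum_congr rfl fun i _ => ?_
      by_cases him : i = m
      · subst him; rw [if_pos rfl, hm, zero_apply]
      · rw [if_neg him]
  ext v
  rw [hp'.toHasFPowerSeriesOnBall.iteratedFDeriv_eq_sum_of_completeSpace]
  simp

end PowerSeries

theorem integral_comp_inv_smul_sub {E F : Type*} [NormedAddCommGroup E] [NormedSpace ℝ E]
    [FiniteDimensional ℝ E] [MeasurableSpace E] [BorelSpace E] [NormedAddCommGroup F]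
    [NormedSpace ℝ F] (μ : Measure E) [μ.IsAddHaarMeasure] (g : E → F) (a : E) {r : ℝ}
    (hr : 0 ≤ r) :
    ∫ x, g (r⁻¹ • (x - a)) ∂μ = r ^ Module.finrank ℝ E • ∫ y, g y ∂μ := by
  rw [integral_sub_right_eq_self (fun x => g (r⁻¹ • x)) a,
    Measure.integral_comp_inv_smul_of_nonneg μ g hr]

theorem HasFiniteFPowerSeriesOnBall.integral_comp_inv_smul_sub_mul {E : Type*}
    [NormedAddCommGroup E] [NormedSpace ℝ E] [FiniteDimensional ℝ E] [MeasurableSpace E]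
    [BorelSpace E] (μ : Measure E) [μ.IsAddHaarMeasure] {P : E → ℝ}
    {q : FormalMultilinearSeries ℝ E ℝ} {a : E} {N : ℕ}
    (hq : HasFiniteFPowerSeriesOnBall P q a N ⊤) {φ : E → ℝ} (hφ : Continuous φ)
    (hφs : HasCompactSupport φ) {r : ℝ} (hr : 0 < r) :
    ∫ x, φ (r⁻¹ • (x - a)) * P x ∂μ =
      r ^ Module.finrank ℝ E * ∑ i ∈ Finset.range N, r ^ i * ∫ y, φ y * q i (fun _ => y) ∂μ := by
  have hint : ∀ i, Integrable (fun y => φ y * q i fun _ => y) μ := fun i =>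
    (hφ.mul (by fun_prop)).integrable_of_hasCompactSupport hφs.mul_right
  calc ∫ x, φ (r⁻¹ • (x - a)) * P x ∂μ
      = ∫ x, (fun y => φ y * P (a + r • y)) (r⁻¹ • (x - a)) ∂μ := by
        simp only [smul_inv_smul₀ hr.ne', add_sub_cancel]
    _ = r ^ Module.finrank ℝ E * ∫ y, φ y * P (a + r • y) ∂μ :=
        integral_comp_inv_smul_sub μ (fun y => φ y * P (a + r • y)) a hr.le
    _ = r ^ Module.finrank ℝ E *
          ∑ i ∈ Finset.range N, ∫ y, r ^ i * (φ y * q i fun _ => y) ∂μ := by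
        rw [← integral_finsetSum _ fun i _ => (hint i).const_mul _]
        congr 1
        refine integral_congr_ae (Eventually.of_forall fun y => ?_)
        simp only [hq.apply_add_smul, smul_eq_mul, Finset.mul_sum]
        exact Finset.sum_congr rfl fun i _ => mul_left_comm _ _ _
    _ = _ := by simp only [integral_const_mul]

open Polynomial in
theorem Polynomial.coeff_eq_zero_of_tendsto_inv_pow_mul_eval {p : ℝ[X]} {k : ℕ}
    (h : Tendsto (fun r => (r ^ k)⁻¹ * p.eval r) (𝓝[>] 0) (𝓝 0)) {i : ℕ} (hi : i ≤ k) :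
    p.coeff i = 0 := by
  by_contra hne
  have hp : p ≠ 0 := fun hp => hne (by simp [hp])
  set j := p.natTrailingDegree
  have hjk : j ≤ k := (natTrailingDegree_le_of_ne_zero hne).trans hi
  obtain ⟨q, hpq⟩ : X ^ j ∣ p :=
    X_pow_dvd_iff.2 fun d hd => coeff_eq_zero_of_lt_natTrailingDegree hd
  have hq0 : q.eval 0 ≠ 0 := by
    have hj : p.coeff j ≠ 0 := trailingCoeff_nonzero_iff_nonzero.2 hp
    rwa [hpq, coeff_X_pow_mul', if_pos le_rfl, Nat.sub_self, coeff_zero_eq_eval_zero] at hj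
  have hlim : Tendsto (fun r => r ^ (k - j) * ((r ^ k)⁻¹ * p.eval r)) (𝓝[>] 0) (𝓝 0) := by
    simpa using (((continuous_pow (k - j)).tendsto 0).mono_left nhdsWithin_le_nhds).mul h
  refine hq0 (tendsto_nhds_unique ?_ hlim)
  refine ((q.continuous.tendsto 0).mono_left nhdsWithin_le_nhds).congr' ?_
  filter_upwards [self_mem_nhdsWithin] with r (hr : 0 < r)
  have hrk : r ^ k = r ^ (k - j) * r ^ j := by rw [← pow_add, Nat.sub_add_cancel hjk]
  rw [hpq, eval_mul, eval_pow, eval_X, hrk]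
  field_simp

open Polynomial in
theorem eq_zero_of_tendsto_inv_pow_mul_sum {c : ℕ → ℝ} {N k : ℕ}
    (h : Tendsto (fun r => (r ^ k)⁻¹ * ∑ i ∈ Finset.range N, r ^ i * c i) (𝓝[>] 0) (𝓝 0))
    {i : ℕ} (hik : i ≤ k) (hiN : i < N) : c i = 0 := by
  set p : ℝ[X] := ∑ i ∈ Finset.range N, C (c i) * X ^ i
  have hp : ∀ r, p.eval r = ∑ i ∈ Finset.range N, r ^ i * c i := fun r => by
    simp only [p, eval_finsetSum, eval_mul, eval_C, eval_pow, eval_X]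
    exact Finset.sum_congr rfl fun i _ => mul_comm _ _
  have := p.coeff_eq_zero_of_tendsto_inv_pow_mul_eval (by simpa only [hp] using h) hik
  simpa [p, finsetSum_coeff, coeff_C_mul_X_pow, hiN] using this

theorem TendstoUniformly.of_iteratedFDeriv_zero {𝕜 E F ι : Type*} [NontriviallyNormedField 𝕜]
    [NormedAddCommGroup E] [NormedSpace 𝕜 E] [NormedAddCommGroup F] [NormedSpace 𝕜 F]
    {l : Filter ι} {f : ι → E → F} {g : E → F}
    (h : TendstoUniformly (fun i => iteratedFDeriv 𝕜 0 (f i)) (iteratedFDeriv 𝕜 0 g) l) :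
    TendstoUniformly f g l := by
  simpa [iteratedFDeriv_zero_eq_comp, Function.comp_def] using
    (continuousMultilinearCurryFin0 𝕜 E F).isometry.uniformContinuous.comp_tendstoUniformly h

theorem tendsto_integral_mul_of_tendstoUniformly {X : Type*} [TopologicalSpace X] [T2Space X]
    [MeasurableSpace X] [OpensMeasurableSpace X] {μ : Measure X} [IsFiniteMeasureOnCompacts μ]
    {φ : ℕ → X → ℝ} {θ Q : X → ℝ} {K : Set X} (hK : IsCompact K) (hφ : ∀ j, Continuous (φ j))
    (hφK : ∀ j, tsupport (φ j) ⊆ K) (hQ : Continuous Q) (h : TendstoUniformly φ θ atTop) :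
    Tendsto (fun j => ∫ x, φ j x * Q x ∂μ) atTop (𝓝 (∫ x, θ x * Q x ∂μ)) := by
  have hθ : Continuous θ := h.continuous (Frequently.of_forall hφ)
  refine tendsto_integral_filter_of_dominated_convergence
    (K.indicator fun x => (‖θ x‖ + 1) * ‖Q x‖)
    (Eventually.of_forall fun j => ((hφ j).mul hQ).aestronglyMeasurable) ?_ ?_
    (Eventually.of_forall fun x => (h.tendsto_at x).mul_const (Q x))
  · filter_upwards [Metric.tendstoUniformly_iff.1 h 1 one_pos] with j hj
    refine Eventually.of_forall fun x => ?_
    by_cases hx : x ∈ K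
    · rw [Set.indicator_of_mem hx, norm_mul]
      have := (norm_sub_norm_le (φ j x) (θ x)).trans_lt (dist_comm (θ x) (φ j x) ▸ hj x)
      gcongr
      linarith
    · rw [Set.indicator_of_notMem hx, image_eq_zero_of_notMem_tsupport fun hx' => hx (hφK j hx'),
        zero_mul, norm_zero]
  · exact (((hθ.norm.add continuous_const).mul hQ.norm).continuousOn.integrableOn_compact
      hK).integrable_indicator hK.measurableSet

theorem eq_zero_of_integral_mul_eq_zero_of_seqDense {n : ℕ} {Δ : Set (Euc n → ℝ)}
    (hΔ : SeqDense Δ) {Q : Euc n → ℝ} (hQ : Continuous Q) (h : ∀ φ ∈ Δ, ∫ x, φ x * Q x = 0) :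
    Q = 0 := by
  have htest : ∀ θ, IsTest θ → ∫ x, θ x * Q x = 0 := by
    intro θ hθ
    obtain ⟨φ, hφΔ, ⟨K, hK, hφK⟩, hφθ⟩ := hΔ.2 θ hθ
    have hlim := tendsto_integral_mul_of_tendstoUniformly (μ := volume) hK
      (fun j => (hΔ.1 _ (hφΔ j)).1.continuous) hφK hQ (hφθ 0).of_iteratedFDeriv_zero
    simp only [h _ (hφΔ _)] at hlim
    exact tendsto_nhds_unique hlim tendsto_const_nhds
  have hae : ∀ᵐ x, Q x = 0 := ae_eq_zero_of_integral_contDiff_smul_eq_zero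
    hQ.locallyIntegrable fun g hg hgs => htest g ⟨hg, hgs⟩
  exact (hQ.ae_eq_iff_eq volume continuous_const).1 hae

/-- Uniqueness lemma for jets. -/
theorem stmt12 (n k : ℕ) (P : Euc n → ℝ) (hP : ∃ d : ℕ, IsPolyDegLE (d : ℤ) P)
    (Δ : Set (Euc n → ℝ)) (hΔ : SeqDense Δ) (a : Euc n)
    (H : ∀ φ ∈ Δ, Filter.Tendsto
      (fun r : ℝ => r ^ (-(k : ℝ) - n) * ∫ x, φ (r⁻¹ • (x - a)) * P x)
      (nhdsWithin 0 (Set.Ioi (0 : ℝ))) (nhds 0)) :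
    ∀ m : ℕ, m ≤ k → iteratedFDeriv ℝ m P a = 0 := by
  obtain ⟨d, hPd⟩ := hP
  obtain ⟨ψ, hψ⟩ := (hPd.resolve_left fun h => (Int.natCast_nonneg d).not_gt h.1).2
  obtain ⟨q, hq⟩ := exists_hasFiniteFPowerSeriesOnBall_of_eq_sum_multilinear ψ hψ a
  have hdiag : ∀ i ≤ k, ∀ y, q i (fun _ => y) = 0 := by
    intro i hik
    rcases le_or_gt ((d : ℤ).toNat + 1) i with hiN | hiN
    · simp [hq.finite i hiN]
    refine congrFun (eq_zero_of_integral_mul_eq_zero_of_seqDense hΔ (by fun_prop) fun φ hφ => ?_)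
    refine eq_zero_of_tendsto_inv_pow_mul_sum (c := fun i => ∫ y, φ y * q i fun _ => y)
      ((H φ hφ).congr' ?_) hik hiN
    filter_upwards [self_mem_nhdsWithin] with r (hr : 0 < r)
    rw [hq.integral_comp_inv_smul_sub_mul volume (hΔ.1 φ hφ).1.continuous (hΔ.1 φ hφ).2 hr,
      finrank_euclideanSpace_fin, ← mul_assoc, Real.rpow_sub hr, Real.rpow_neg hr.le,
      Real.rpow_natCast, Real.rpow_natCast]
    field_simp
  exact fun m hm => hq.iteratedFDeriv_eq_zero (hdiag m hm)
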